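/- (Theorem 1, discrete-time analogue.) Consider two discrete-time Markov chains on augmented states (x,f) ∈ ℤ₊^n × ℤ₊^{n+1} evolving by the linear-network transitions with probabilities proportional to rates λ, μ_1,…,μ_n and λ', μ'_1,…,μ'_n, coupled by the marching soldiers scheme, started from equal initial states and zero flow counters. Under rate conditions (a)–(c) of the absorbing-set lemma, almost surely F_{i,i+1}(t) ≤ F'_{i,i+1}(t) for all times t and all links i = 0,…,n; consequently (F_{i,i+1}(t))_t ≤_st (F'_{i,i+1}(t))_t. -/

import Mathlib

open MeasureTheory

/-- Population step over link `j` of the open linear network (nodes 0-based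
in `Fin n`; link `0` is the arrival link, link `j` for `1 ≤ j ≤ n` the
service link out of node `j−1`). -/
def stepX (n : ℕ) (j : Fin (n + 1)) (x : Fin n → ℤ) : Fin n → ℤ :=
  fun k => x k + (if (j : ℕ) = (k : ℕ) then 1 else 0)
             - (if (j : ℕ) = (k : ℕ) + 1 then 1 else 0)

/-- Flow-counter step over link `j`. -/
def stepF (n : ℕ) (j : Fin (n + 1)) (f : Fin (n + 1) → ℤ) : Fin (n + 1) → ℤ :=
  fun l => f l + (if l = j then 1 else 0)

/-- A joint state of the coupled state–flow chains:
`((x, f), (x', f'))`. -/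
abbrev CState (n : ℕ) :=
  ((Fin n → ℤ) × (Fin (n + 1) → ℤ)) × ((Fin n → ℤ) × (Fin (n + 1) → ℤ))

/-- One transition of the marching soldiers coupling with strictly positive
probability (proportional to a positive rate): over some link `j`, either a
joint move (positive `min` of the two rates), a solitary move of the first
component (positive rate excess), or a solitary move of the second. -/
def CoupledStep (n : ℕ) (r r' : Fin (n + 1) → (Fin n → ℤ) → ℝ)
    (p q : CState n) : Prop :=
  ∃ j : Fin (n + 1),
    (0 < min (r j p.1.1) (r' j p.2.1) ∧
      q = ((stepX n j p.1.1, stepF n j p.1.2), (stepX n j p.2.1, stepF n j p.2.2))) ∨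
    (r' j p.2.1 < r j p.1.1 ∧
      q = ((stepX n j p.1.1, stepF n j p.1.2), p.2)) ∨
    (r j p.1.1 < r' j p.2.1 ∧
      q = (p.1, (stepX n j p.2.1, stepF n j p.2.2)))

/-! Node `k` gains a customer over link `k` and loses one over link `k + 1`, so
`x_k - x'_k = d_{k+1} - d_k` for the flow deficits `d = F' - F`, as long as both chains
started from the same populations. A tie `d_j = 0` on link `j` with `d ≥ 0` therefore means
that the first chain has no more customers than the second just before link `j` and no fewer
just after it, and the rate conditions then forbid it to move alone over `j`. Hence under
the marching soldiers coupling `F ≤ F'` is never violated, pathwise; the stochastic order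
follows by integrating bounded monotone functionals. -/

/-- The population node `k` started with: its inflow is counted on link `k.castSucc`, its
outflow on link `k.succ`. -/
def initialPop {n : ℕ} (x : Fin n → ℤ) (f : Fin (n + 1) → ℤ) (k : Fin n) : ℤ :=
  x k - f k.castSucc + f k.succ

@[simp]
lemma initialPop_step {n : ℕ} (j : Fin (n + 1)) (x : Fin n → ℤ) (f : Fin (n + 1) → ℤ) :
    initialPop (stepX n j x) (stepF n j f) = initialPop x f := by
  funext k
  simp only [initialPop, stepX, stepF, Fin.ext_iff, Fin.val_castSucc, Fin.val_succ]
  split_ifs <;> omega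

section Comparison

variable {n : ℕ} {x x' : Fin n → ℤ} {f f' : Fin (n + 1) → ℤ}

lemma le_of_flow_eq_succ (hf : f ≤ f') (hpop : initialPop x f = initialPop x' f')
    (k : Fin n) (hk : f k.succ = f' k.succ) : x k ≤ x' k := by
  have := congrFun hpop k
  have := hf k.castSucc
  simp only [initialPop] at *
  omega

lemma le_of_flow_eq_castSucc (hf : f ≤ f') (hpop : initialPop x f = initialPop x' f')
    (k : Fin n) (hk : f k.castSucc = f' k.castSucc) : x' k ≤ x k := by
  have := congrFun hpop k
  have := hf k.succ
  simp only [initialPop] at *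
  omega

end Comparison

/-- Conditions (a)–(c), with `r 0 = λ` and `r j = μ_j` for `1 ≤ j ≤ n`; node `i` of the
network is `⟨i - 1, _⟩ : Fin n`. -/
structure RateConditions (n : ℕ) (hn : 0 < n) (S S' : Set (Fin n → ℤ))
    (r r' : Fin (n + 1) → (Fin n → ℤ) → ℝ) : Prop where
  arrival : ∀ x ∈ S, ∀ x' ∈ S', x' ⟨0, hn⟩ ≤ x ⟨0, hn⟩ → r 0 x ≤ r' 0 x'
  internal : ∀ (j : Fin (n + 1)), 0 < (j : ℕ) → ∀ hjn : (j : ℕ) < n,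
    ∀ x ∈ S, ∀ x' ∈ S',
      x ⟨(j : ℕ) - 1, (j.val.sub_le 1).trans_lt hjn⟩ ≤
        x' ⟨(j : ℕ) - 1, (j.val.sub_le 1).trans_lt hjn⟩ →
      x' ⟨(j : ℕ), hjn⟩ ≤ x ⟨(j : ℕ), hjn⟩ →
      r j x ≤ r' j x'
  departure : ∀ x ∈ S, ∀ x' ∈ S',
    x ⟨n - 1, Nat.sub_one_lt_of_lt hn⟩ ≤ x' ⟨n - 1, Nat.sub_one_lt_of_lt hn⟩ →
    r (Fin.last n) x ≤ r' (Fin.last n) x'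

lemma RateConditions.rate_le_of_flow_eq {n : ℕ} {hn : 0 < n} {S S' : Set (Fin n → ℤ)}
    {r r' : Fin (n + 1) → (Fin n → ℤ) → ℝ} (hR : RateConditions n hn S S' r r')
    {x x' : Fin n → ℤ} {f f' : Fin (n + 1) → ℤ} (hx : x ∈ S) (hx' : x' ∈ S')
    (hf : f ≤ f') (hpop : initialPop x f = initialPop x' f') (j : Fin (n + 1))
    (hj : f j = f' j) : r j x ≤ r' j x' := by
  obtain ⟨j, hjlt⟩ := j
  rcases Nat.eq_zero_or_pos j with rfl | hj0
  · exact hR.arrival x hx x' hx' (le_of_flow_eq_castSucc hf hpop ⟨0, hn⟩ hj)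
  rcases Nat.lt_or_ge j n with hjn | hjn
  · have hsucc : (⟨j - 1, by omega⟩ : Fin n).succ = ⟨j, hjlt⟩ := Fin.ext (by simp; omega)
    exact hR.internal ⟨j, hjlt⟩ hj0 hjn x hx x' hx'
      (le_of_flow_eq_succ hf hpop _ (by rwa [hsucc]))
      (le_of_flow_eq_castSucc hf hpop ⟨j, hjn⟩ hj)
  · obtain rfl : n = j := by omega
    have hsucc : (⟨n - 1, by omega⟩ : Fin n).succ = Fin.last n := Fin.ext (by simp; omega)
    exact hR.departure x hx x' hx' (le_of_flow_eq_succ hf hpop _ (by rwa [hsucc]))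

def CouplingInv {n : ℕ} (p : CState n) : Prop :=
  p.1.2 ≤ p.2.2 ∧ initialPop p.1.1 p.1.2 = initialPop p.2.1 p.2.2

lemma couplingInv_of_eq_of_zero {n : ℕ} {p : CState n} (hx : p.1.1 = p.2.1)
    (hf : p.1.2 = 0) (hf' : p.2.2 = 0) : CouplingInv p := by
  refine ⟨by rw [hf, hf'], ?_⟩
  rw [hx, hf, hf']

lemma stepF_le_stepF {n : ℕ} {f f' : Fin (n + 1) → ℤ} (hf : f ≤ f') (j : Fin (n + 1)) :
    stepF n j f ≤ stepF n j f' :=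
  fun l => add_le_add_left (hf l) _

lemma le_stepF {n : ℕ} (f : Fin (n + 1) → ℤ) (j : Fin (n + 1)) :
    f ≤ stepF n j f :=
  fun l => le_add_of_nonneg_right (by split_ifs <;> norm_num)

lemma stepF_le_of_lt {n : ℕ} {f f' : Fin (n + 1) → ℤ} (hf : f ≤ f') {j : Fin (n + 1)}
    (hj : f j < f' j) : stepF n j f ≤ f' := by
  intro l
  simp only [stepF]
  split_ifs with hl
  · subst hl; omega
  · simpa using hf l

/-- A solitary move of the first chain over `j` needs `r' j x' < r j x`, which
`rate_le_of_flow_eq` excludes unless `F_j < F'_j`. -/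
lemma RateConditions.couplingInv_of_step {n : ℕ} {hn : 0 < n} {S S' : Set (Fin n → ℤ)}
    {r r' : Fin (n + 1) → (Fin n → ℤ) → ℝ} (hR : RateConditions n hn S S' r r')
    {p q : CState n} (hS : p.1.1 ∈ S) (hS' : p.2.1 ∈ S') (hp : CouplingInv p)
    (hpq : q = p ∨ CoupledStep n r r' p q) : CouplingInv q := by
  obtain ⟨hf, hpop⟩ := hp
  rcases hpq with rfl | ⟨j, ⟨-, rfl⟩ | ⟨hlt, rfl⟩ | ⟨-, rfl⟩⟩
  · exact ⟨hf, hpop⟩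
  · exact ⟨stepF_le_stepF hf j, by simpa using hpop⟩
  · have hj : p.1.2 j < p.2.2 j := (hf j).lt_of_ne fun h =>
      (hR.rate_le_of_flow_eq hS hS' hf hpop j h).not_gt hlt
    exact ⟨stepF_le_of_lt hf hj, by simpa using hpop⟩
  · exact ⟨hf.trans (le_stepF _ j), by simpa using hpop⟩

lemma integral_comp_le_integral_comp_of_ae_le {Ω α : Type*} [MeasurableSpace Ω]
    {P : Measure Ω} [IsFiniteMeasure P] [Preorder α] [MeasurableSpace α] {X Y : Ω → α}
    (hX : Measurable X) (hY : Measurable Y) (hXY : X ≤ᵐ[P] Y) {φ : α → ℝ}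
    (hφ : Measurable φ) (hmono : Monotone φ) (hbdd : ∃ C, ∀ v, |φ v| ≤ C) :
    ∫ ω, φ (X ω) ∂P ≤ ∫ ω, φ (Y ω) ∂P := by
  obtain ⟨C, hC⟩ := hbdd
  have hint : ∀ {W : Ω → α}, Measurable W → Integrable (fun ω => φ (W ω)) P := fun hW =>
    .of_bound (hφ.comp hW).aestronglyMeasurable C (.of_forall fun ω => hC _)
  exact integral_mono_ae (hint hX) (hint hY) (hXY.mono fun ω h => hmono h)

/-- (Theorem 1, discrete-time analogue.)  Two discrete-time linear-network
state–flow chains coupled by the marching soldiers scheme, started from equal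
initial states and zero flow counters.  Under the rate conditions
(a) `x₁ ≥ x'₁ ⟹ λ(x) ≤ λ'(x')`,
(b) `x_i ≤ x'_i ∧ x_{i+1} ≥ x'_{i+1} ⟹ μ_i(x) ≤ μ'_i(x')` for internal `i`,
(c) `x_n ≤ x'_n ⟹ μ_n(x) ≤ μ'_n(x')`,
almost surely `F_{i,i+1}(t) ≤ F'_{i,i+1}(t)` for all times `t` and links `i`;
consequently the flow counting processes are ordered in the strong stochastic
order of finite-dimensional distributions. -/
theorem stmt8 (n : ℕ) (hn : 0 < n)
    (S S' : Set (Fin n → ℤ))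
    (r r' : Fin (n + 1) → (Fin n → ℤ) → ℝ)
    (ha : ∀ x ∈ S, ∀ x' ∈ S', x' ⟨0, hn⟩ ≤ x ⟨0, hn⟩ → r 0 x ≤ r' 0 x')
    (hb : ∀ (j : Fin (n + 1)) (hj0 : 0 < (j : ℕ)) (hjn : (j : ℕ) < n),
      ∀ x ∈ S, ∀ x' ∈ S',
        x ⟨(j : ℕ) - 1, by omega⟩ ≤ x' ⟨(j : ℕ) - 1, by omega⟩ →
        x' ⟨(j : ℕ), hjn⟩ ≤ x ⟨(j : ℕ), hjn⟩ →
        r j x ≤ r' j x')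
    (hc : ∀ x ∈ S, ∀ x' ∈ S',
      x ⟨n - 1, by omega⟩ ≤ x' ⟨n - 1, by omega⟩ →
      r (Fin.last n) x ≤ r' (Fin.last n) x')
    {Ω : Type*} [MeasurableSpace Ω] (P : Measure Ω) [IsProbabilityMeasure P]
    (Z : ℕ → Ω → CState n)
    (hZmeas : ∀ t, Measurable (Z t))
    -- the chains stay in their state spaces:
    (hZS : ∀ᵐ ω ∂P, ∀ t, (Z t ω).1.1 ∈ S ∧ (Z t ω).2.1 ∈ S')
    -- equal initial states and zero flow counters:
    (hZ0 : ∀ᵐ ω ∂P, (Z 0 ω).1.1 = (Z 0 ω).2.1 ∧ (Z 0 ω).1.2 = 0 ∧ (Z 0 ω).2.2 = 0)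
    -- each step is a positive-rate marching soldiers transition (or no move):
    (hZstep : ∀ᵐ ω ∂P, ∀ t,
      Z (t + 1) ω = Z t ω ∨ CoupledStep n r r' (Z t ω) (Z (t + 1) ω)) :
    (∀ᵐ ω ∂P, ∀ (t : ℕ) (j : Fin (n + 1)), (Z t ω).1.2 j ≤ (Z t ω).2.2 j) ∧
    (∀ (j : Fin (n + 1)) (m : ℕ) (ts : Fin m → ℕ) (φ : (Fin m → ℝ) → ℝ),
      Measurable φ → Monotone φ → (∃ C, ∀ v, |φ v| ≤ C) →
      ∫ ω, φ (fun k => ((Z (ts k) ω).1.2 j : ℝ)) ∂P ≤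
        ∫ ω, φ (fun k => ((Z (ts k) ω).2.2 j : ℝ)) ∂P) := by
  have hR : RateConditions n hn S S' r r' := ⟨ha, hb, hc⟩
  have hinv : ∀ᵐ ω ∂P, ∀ t, CouplingInv (Z t ω) := by
    filter_upwards [hZS, hZ0, hZstep] with ω hS h0 hstep t
    induction t with
    | zero => exact couplingInv_of_eq_of_zero h0.1 h0.2.1 h0.2.2
    | succ t ih => exact hR.couplingInv_of_step (hS t).1 (hS t).2 ih (hstep t)
  have hflow : ∀ᵐ ω ∂P, ∀ (t : ℕ) (j : Fin (n + 1)), (Z t ω).1.2 j ≤ (Z t ω).2.2 j :=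
    hinv.mono fun ω h t => (h t).1
  refine ⟨hflow, fun j m ts φ hφ hmono hbdd => ?_⟩
  refine integral_comp_le_integral_comp_of_ae_le ?_ ?_
    (hflow.mono fun ω h k => Int.cast_le.mpr (h (ts k) j)) hφ hmono hbdd
  all_goals exact measurable_pi_lambda _ fun k =>
    measurable_from_top.comp ((measurable_pi_apply j).comp (by fun_prop))
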